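/- Suppose in addition that 0 < ρ ≤ 2R, ε ≤ ρ², (1 + κ⁻¹)·ρ² ≤ 1/2, and that 1/M ≤ Δδ(y') ≤ M for all y' ∈ B'_ρ(0'), for some M ≥ 1, where Δδ = Σ_{i=1}^{n−1} ∂²_{y_i}δ. Let c ≥ 0 be a constant and let u₂ ∈ C²(B'_ρ(0')) ∩ C⁰(closure) satisfy Σ_{i=1}^{n−1} ∂_{y_i}( δ(y')·∂_{y_i} u₂(y') ) = c in B'_ρ(0') with u₂ = 0 on ∂B'_ρ(0'). Then there exists a constant C depending only on n, κ, M such that for all y' ∈ B'_ρ(0'): M·c·ln δ(y') − C·c·|ln ρ| ≤ u₂(y') ≤ (1/M)·c·ln δ(y') + C·c·|ln ρ|. -/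

import Mathlib

noncomputable section
open MeasureTheory Real
open scoped BigOperators

/-- ℝ^{n-1}, realized as a `d`-dimensional Euclidean space (d = n − 1). -/
abbrev Rsp (d : ℕ) := EuclideanSpace ℝ (Fin d)

/-- η(z') = ε + |z'|². -/
def eta {d : ℕ} (ε : ℝ) (z' : Rsp d) : ℝ := ε + ‖z'‖ ^ 2

/-- δ(z') = ε + f(z') − g(z'). -/
def dlt {d : ℕ} (ε : ℝ) (f g : Rsp d → ℝ) (z' : Rsp d) : ℝ := ε + f z' - g z'

/-- The narrow region Ω_r(z) = {(x', x_n) : |x' − z'| < r, g(x') < x_n < ε + f(x')}. -/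
def Om {d : ℕ} (ε : ℝ) (f g : Rsp d → ℝ) (r : ℝ) (z : Rsp d × ℝ) : Set (Rsp d × ℝ) :=
  {x | ‖x.1 - z.1‖ < r ∧ g x.1 < x.2 ∧ x.2 < ε + f x.1}

/-- The cylinder Q_{δ,s}(z) = {(y', y_n) : |y' − z'| < s, |y_n| < δ(z')}. -/
def Qc {d : ℕ} (ε : ℝ) (f g : Rsp d → ℝ) (s : ℝ) (z : Rsp d × ℝ) : Set (Rsp d × ℝ) :=
  {y | ‖y.1 - z.1‖ < s ∧ |y.2| < dlt ε f g z.1}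

/-- The geometric hypotheses on the two graphs f and g: both C², vanishing to first
order at the origin, f ≥ g, relative strict convexity (κ-pinching) of f − g, and C²
norms bounded by K on the ball of radius 2R. -/
def GoodFG {d : ℕ} (R κ K : ℝ) (f g : Rsp d → ℝ) : Prop :=
  ContDiff ℝ 2 f ∧ ContDiff ℝ 2 g ∧ f 0 = 0 ∧ g 0 = 0 ∧
  fderiv ℝ f 0 = 0 ∧ fderiv ℝ g 0 = 0 ∧
  (∀ x' : Rsp d, ‖x'‖ ≤ 2 * R → g x' ≤ f x') ∧
  (∀ x' : Rsp d, ‖x'‖ ≤ 2 * R → κ * ‖x'‖ ^ 2 ≤ f x' - g x' ∧ f x' - g x' ≤ κ⁻¹ * ‖x'‖ ^ 2) ∧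
  (∀ x' : Rsp d, ‖x'‖ ≤ 2 * R →
    |f x'| ≤ K ∧ ‖fderiv ℝ f x'‖ ≤ K ∧ ‖fderiv ℝ (fderiv ℝ f) x'‖ ≤ K) ∧
  (∀ x' : Rsp d, ‖x'‖ ≤ 2 * R →
    |g x'| ≤ K ∧ ‖fderiv ℝ g x'‖ ≤ K ∧ ‖fderiv ℝ (fderiv ℝ g) x'‖ ≤ K)

/-- Second directional derivative of u at x in direction v. -/
def dd2 {d : ℕ} (u : Rsp d × ℝ → ℝ) (v : Rsp d × ℝ) (x : Rsp d × ℝ) : ℝ :=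
  fderiv ℝ (fun y => fderiv ℝ u y v) x v

/-- The Laplacian of u on ℝ^{n-1} × ℝ (sum of pure second derivatives in the
coordinate directions). -/
def lapl {d : ℕ} (u : Rsp d × ℝ → ℝ) (x : Rsp d × ℝ) : ℝ :=
  (∑ i : Fin d, dd2 u (EuclideanSpace.single i (1 : ℝ), (0 : ℝ)) x)
    + dd2 u ((0 : Rsp d), (1 : ℝ)) x

/-- u is harmonic in Ω_{2R}, has zero (co)normal derivative on the upper graph
Γ⁺ = {x_n = ε + f(x')}, and outward normal derivative φ·(normalization) on the lower
graph Γ⁻ = {x_n = g(x')}: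
∂_{x_n}u = ∇f·∇_{x'}u on Γ⁺, and ∇g·∇_{x'}u − ∂_{x_n}u = φ·√(1+|∇g|²) on Γ⁻. -/
def IsSolNeu {d : ℕ} (ε R : ℝ) (f g : Rsp d → ℝ) (φ : Rsp d → ℝ)
    (u : Rsp d × ℝ → ℝ) : Prop :=
  (∀ x ∈ Om ε f g (2 * R) (0 : Rsp d × ℝ), lapl u x = 0) ∧
  (∀ x' : Rsp d, ‖x'‖ < 2 * R →
    fderiv ℝ u (x', ε + f x') ((0 : Rsp d), (1 : ℝ))
      = fderiv ℝ u (x', ε + f x') (gradient f x', (0 : ℝ))) ∧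
  (∀ x' : Rsp d, ‖x'‖ < 2 * R →
    fderiv ℝ u (x', g x') (gradient g x', (0 : ℝ))
        - fderiv ℝ u (x', g x') ((0 : Rsp d), (1 : ℝ))
      = φ x' * Real.sqrt (1 + ‖gradient g x'‖ ^ 2))

/-- u ∈ C²(Ω_{2R}) ∩ C¹(closure Ω_{2R}). -/
def RegC2C1 {d : ℕ} (ε R : ℝ) (f g : Rsp d → ℝ) (u : Rsp d × ℝ → ℝ) : Prop :=
  ContDiffOn ℝ 2 u (Om ε f g (2 * R) (0 : Rsp d × ℝ)) ∧
  (∀ x ∈ closure (Om ε f g (2 * R) (0 : Rsp d × ℝ)), DifferentiableAt ℝ u x) ∧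
  ContinuousOn (fderiv ℝ u) (closure (Om ε f g (2 * R) (0 : Rsp d × ℝ)))

/-- φ ∈ C^α(B'_{2R}(0')). -/
def HolderPhi {d : ℕ} (α R : ℝ) (φ : Rsp d → ℝ) : Prop :=
  ∃ L : ℝ, ∀ x' y' : Rsp d, ‖x'‖ ≤ 2 * R → ‖y'‖ ≤ 2 * R →
    |φ x' - φ y'| ≤ L * ‖x' - y'‖ ^ α

/-- The sup norm of h over E. -/
def supN {X Y : Type*} [NormedAddCommGroup X] [NormedAddCommGroup Y]
    (E : Set X) (h : X → Y) : ℝ :=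
  sSup ((fun x => ‖h x‖) '' E)

/-- The Hölder seminorm [h]_{C^μ(E)}. -/
def hSemi {X Y : Type*} [NormedAddCommGroup X] [NormedAddCommGroup Y]
    (μ : ℝ) (E : Set X) (h : X → Y) : ℝ :=
  sSup ((fun p : X × X => ‖h p.1 - h p.2‖ / ‖p.1 - p.2‖ ^ μ) ''
    {p : X × X | p.1 ∈ E ∧ p.2 ∈ E ∧ p.1 ≠ p.2})

/-- The oscillation of h over E. -/
def oscS {X : Type*} (E : Set X) (h : X → ℝ) : ℝ := sSup (h '' E) - sInf (h '' E)

/-- The weighted norm ‖∇u‖*_{C^μ(E)} := sup_E |∇u| + η(z')^μ·[∇u]_{C^μ(E)}. -/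
def gradStar {d : ℕ} (ε μ : ℝ) (z' : Rsp d) (E : Set (Rsp d × ℝ)) (u : Rsp d × ℝ → ℝ) : ℝ :=
  supN E (fun x => fderiv ℝ u x) + (eta ε z') ^ μ * hSemi μ E (fun x => fderiv ℝ u x)

/-- The weighted boundary norm ‖φ‖*_{C^α(Γ_s⁻(z))} := sup_{B'_s(z')}|φ| + η(z')^α·[φ]_{C^α(B'_s(z'))}. -/
def phiStar {d : ℕ} (ε α : ℝ) (z' : Rsp d) (s : ℝ) (φ : Rsp d → ℝ) : ℝ :=
  supN (Metric.ball z' s) φ + (eta ε z') ^ α * hSemi α (Metric.ball z' s) φ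

/-- The change of variables Φ_z(x) = (x', 2δ(z')·((x_n − g(x'))/δ(x') − 1/2)). -/
def Phi {d : ℕ} (ε : ℝ) (f g : Rsp d → ℝ) (z' : Rsp d) (x : Rsp d × ℝ) : Rsp d × ℝ :=
  (x.1, 2 * dlt ε f g z' * ((x.2 - g x.1) / dlt ε f g x.1 - 1 / 2))

/-- The inverse change of variables Φ_z⁻¹(y) = (y', g(y') + δ(y')·(y_n/(2δ(z')) + 1/2)). -/
def Psi {d : ℕ} (ε : ℝ) (f g : Rsp d → ℝ) (z' : Rsp d) (y : Rsp d × ℝ) : Rsp d × ℝ :=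
  (y.1, g y.1 + dlt ε f g y.1 * (y.2 / (2 * dlt ε f g z') + 1 / 2))

/-- e^i(y) := ∂_{y_i}g(y')·(y_n − δ(z'))/δ(y') − ∂_{y_i}f(y')·(y_n + δ(z'))/δ(y'). -/
def ee {d : ℕ} (ε : ℝ) (f g : Rsp d → ℝ) (z' : Rsp d) (i : Fin d) (y : Rsp d × ℝ) : ℝ :=
  fderiv ℝ g y.1 (EuclideanSpace.single i (1 : ℝ)) * (y.2 - dlt ε f g z') / dlt ε f g y.1
    - fderiv ℝ f y.1 (EuclideanSpace.single i (1 : ℝ)) * (y.2 + dlt ε f g z') / dlt ε f g y.1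

/-- a^{ii}(y) = δ(y')/(2δ(z')) for 1 ≤ i ≤ n−1. -/
def aii {d : ℕ} (ε : ℝ) (f g : Rsp d → ℝ) (z' : Rsp d) (y : Rsp d × ℝ) : ℝ :=
  dlt ε f g y.1 / (2 * dlt ε f g z')

/-- a^{nj}(y) = (δ(y')/(2δ(z')))·e^j(y) for 1 ≤ j ≤ n−1. -/
def anj {d : ℕ} (ε : ℝ) (f g : Rsp d → ℝ) (z' : Rsp d) (j : Fin d) (y : Rsp d × ℝ) : ℝ :=
  dlt ε f g y.1 / (2 * dlt ε f g z') * ee ε f g z' j y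

/-- a^{nn}(y) = (δ(y')/(2δ(z')))·(Σ_i e^i(y)² + (2δ(z')/δ(y'))²). -/
def ann {d : ℕ} (ε : ℝ) (f g : Rsp d → ℝ) (z' : Rsp d) (y : Rsp d × ℝ) : ℝ :=
  dlt ε f g y.1 / (2 * dlt ε f g z') *
    ((∑ i : Fin d, ee ε f g z' i y ^ 2) + (2 * dlt ε f g z' / dlt ε f g y.1) ^ 2)

/-- Second directional derivative for functions on ℝ^{n−1}. -/
def dd2v {d : ℕ} (h : Rsp d → ℝ) (v : Rsp d) (x : Rsp d) : ℝ :=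
  fderiv ℝ (fun y => fderiv ℝ h y v) x v

/-!
The operator `L w = Σᵢ ∂ᵢ(δ ∂ᵢ w)` satisfies the weak maximum principle on a ball, because
`L (log δ) = Δδ > 0` supplies a strict subsolution. The functions `M c log δ - u₂` and
`u₂ - (c / M) log δ` are `L`-subharmonic when `1/M ≤ Δδ ≤ M`, so they are bounded by their
values on the sphere `|y'| = ρ`, where `κ ρ² ≤ δ ≤ 1` gives `|log δ| ≲ |log ρ|`.
-/

open Filter Metric Topology

theorem IsLocalMax.deriv_deriv_nonpos {f : ℝ → ℝ} {x₀ : ℝ} (hmax : IsLocalMax f x₀)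
    (hc : ContinuousAt f x₀) : deriv (deriv f) x₀ ≤ 0 := by
  by_contra! hpos
  -- A positive second derivative would also make `x₀` a local minimum, so `f` is locally constant.
  have hmin := isLocalMin_of_deriv_deriv_pos hpos hmax.deriv_eq_zero hc
  have hconst : f =ᶠ[𝓝 x₀] fun _ => f x₀ := by
    filter_upwards [hmin, hmax] with x h₁ h₂ using le_antisymm h₂ h₁
  rw [hconst.deriv.deriv_eq] at hpos
  simp at hpos

section DivergenceForm

variable {E ι : Type*} [NormedAddCommGroup E] [NormedSpace ℝ E] [Fintype ι]

theorem ContDiffAt.differentiableAt_fderiv_apply {h : E → ℝ} {y : E} (hh : ContDiffAt ℝ 2 h y)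
    (v : E) : DifferentiableAt ℝ (fun z => fderiv ℝ h z v) y :=
  ((hh.fderiv_right (m := 1) (by norm_num)).differentiableAt (by norm_num)).clm_apply
    (differentiableAt_const v)

theorem IsLocalMax.fderiv_fderiv_apply_nonpos {h : E → ℝ} {y₀ : E} (hmax : IsLocalMax h y₀)
    (hh : ContDiffAt ℝ 2 h y₀) (v : E) :
    fderiv ℝ (fun z => fderiv ℝ h z v) y₀ v ≤ 0 := by
  set L : ℝ → E := fun t => y₀ + t • v
  have hL : ∀ t, HasDerivAt L v t := fun t => by
    simpa only [one_smul] using ((hasDerivAt_id' t).smul_const v).const_add y₀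
  have hL0 : L 0 = y₀ := by simp [L]
  have hLc : ContinuousAt L 0 := (hL 0).continuousAt
  rw [← hL0] at hmax hh ⊢
  have hderiv : deriv (h ∘ L) =ᶠ[𝓝 0] fun t => fderiv ℝ h (L t) v := by
    filter_upwards [hLc.eventually (hh.eventually (by simp))] with t ht
    exact ((ht.differentiableAt (by norm_num)).hasFDerivAt.comp_hasDerivAt t (hL t)).deriv
  have hsecond : HasDerivAt (fun t => fderiv ℝ h (L t) v)
      (fderiv ℝ (fun z => fderiv ℝ h z v) (L 0) v) 0 :=
    (hh.differentiableAt_fderiv_apply v).hasFDerivAt.comp_hasDerivAt 0 (hL 0)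
  rw [← hsecond.deriv, ← hderiv.deriv_eq]
  exact (hmax.comp_continuous hLc).deriv_deriv_nonpos (hh.continuousAt.comp hLc)

def divForm (v : ι → E) (a w : E → ℝ) (y : E) : ℝ :=
  ∑ i, fderiv ℝ (fun z => a z * fderiv ℝ w z (v i)) y (v i)

def laplacianAlong (v : ι → E) (a : E → ℝ) (y : E) : ℝ :=
  ∑ i, fderiv ℝ (fun z => fderiv ℝ a z (v i)) y (v i)

theorem IsLocalMax.divForm_nonpos (v : ι → E) {a w : E → ℝ} {y₀ : E} (hmax : IsLocalMax w y₀)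
    (hw : ContDiffAt ℝ 2 w y₀) (ha : DifferentiableAt ℝ a y₀) (ha0 : 0 ≤ a y₀) :
    divForm v a w y₀ ≤ 0 := by
  refine Finset.sum_nonpos fun i _ => ?_
  rw [fderiv_fun_mul ha (hw.differentiableAt_fderiv_apply (v i))]
  simp only [hmax.fderiv_eq_zero, add_apply, smul_apply,
    zero_apply, smul_eq_mul, zero_mul, add_zero]
  exact mul_nonpos_of_nonneg_of_nonpos ha0 (hmax.fderiv_fderiv_apply_nonpos hw (v i))

theorem divForm_mul_add_mul_add_const (v : ι → E) {a h w : E → ℝ} {y : E} (s t b : ℝ)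
    (ha : DifferentiableAt ℝ a y) (hh : ContDiffAt ℝ 2 h y) (hw : ContDiffAt ℝ 2 w y) :
    divForm v a (fun z => s * h z + t * w z + b) y = s * divForm v a h y + t * divForm v a w y := by
  simp only [divForm, Finset.mul_sum, ← Finset.sum_add_distrib]
  refine Finset.sum_congr rfl fun i _ => ?_
  have hflux : (fun z => a z * fderiv ℝ (fun z => s * h z + t * w z + b) z (v i)) =ᶠ[𝓝 y]
      fun z => s * (a z * fderiv ℝ h z (v i)) + t * (a z * fderiv ℝ w z (v i)) := by
    filter_upwards [hh.eventually (by simp), hw.eventually (by simp)] with z hhz hwz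
    have hz : HasFDerivAt (fun z => s * h z + t * w z + b)
        (s • fderiv ℝ h z + t • fderiv ℝ w z) z :=
      (((hhz.differentiableAt (by norm_num)).hasFDerivAt.const_mul s).add
        ((hwz.differentiableAt (by norm_num)).hasFDerivAt.const_mul t)).add_const b
    rw [hz.fderiv]
    simp only [add_apply, smul_apply, smul_eq_mul]
    ring
  have hdh : DifferentiableAt ℝ (fun z => a z * fderiv ℝ h z (v i)) y :=
    ha.mul (hh.differentiableAt_fderiv_apply (v i))
  have hdw : DifferentiableAt ℝ (fun z => a z * fderiv ℝ w z (v i)) y :=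
    ha.mul (hw.differentiableAt_fderiv_apply (v i))
  rw [hflux.fderiv_eq, fderiv_fun_add (hdh.const_mul s) (hdw.const_mul t),
    fderiv_const_mul hdh, fderiv_const_mul hdw]
  rfl

theorem divForm_log (v : ι → E) {a : E → ℝ} {y : E}
    (ha : ∀ᶠ z in 𝓝 y, DifferentiableAt ℝ a z) (ha0 : a y ≠ 0) :
    divForm v a (fun z => Real.log (a z)) y = laplacianAlong v a y := by
  refine Finset.sum_congr rfl fun i _ => ?_
  have hflux : (fun z => a z * fderiv ℝ (fun z => Real.log (a z)) z (v i)) =ᶠ[𝓝 y]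
      fun z => fderiv ℝ a z (v i) := by
    filter_upwards [ha, ha.self_of_nhds.continuousAt.eventually_ne ha0] with z hz hz0
    rw [(hz.hasFDerivAt.log hz0).fderiv]
    simp only [smul_apply, smul_eq_mul]
    field_simp
  rw [hflux.fderiv_eq]

variable [ProperSpace E]

theorem nonpos_of_divForm_pos (v : ι → E) {a w : E → ℝ} {x : E} {r : ℝ}
    (ha : ∀ y ∈ ball x r, DifferentiableAt ℝ a y) (ha0 : ∀ y ∈ ball x r, 0 ≤ a y)
    (hw : ContDiffOn ℝ 2 w (ball x r)) (hwc : ContinuousOn w (closedBall x r))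
    (hLw : ∀ y ∈ ball x r, 0 < divForm v a w y) (hb : ∀ y ∈ sphere x r, w y ≤ 0) :
    ∀ y ∈ ball x r, w y ≤ 0 := by
  intro y hy
  obtain ⟨y₀, hy₀, hmax⟩ :=
    (isCompact_closedBall x r).exists_isMaxOn ⟨y, ball_subset_closedBall hy⟩ hwc
  have hy₀_sphere : y₀ ∈ sphere x r := by
    rw [← closedBall_sdiff_ball]
    refine ⟨hy₀, fun hin => (hLw y₀ hin).not_ge ?_⟩
    have hnhds := isOpen_ball.mem_nhds hin
    exact (hmax.isLocalMax (mem_of_superset hnhds ball_subset_closedBall)).divForm_nonpos v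
      (hw.contDiffAt hnhds) (ha y₀ hin) (ha0 y₀ hin)
  exact (hmax (ball_subset_closedBall hy)).trans (hb y₀ hy₀_sphere)

theorem nonpos_of_divForm_nonneg (v : ι → E) {a h w : E → ℝ} {x : E} {r : ℝ}
    (ha : ∀ y ∈ ball x r, DifferentiableAt ℝ a y) (ha0 : ∀ y ∈ ball x r, 0 ≤ a y)
    (hh : ContDiffOn ℝ 2 h (ball x r)) (hhc : ContinuousOn h (closedBall x r))
    (hLh : ∀ y ∈ ball x r, 0 < divForm v a h y)
    (hw : ContDiffOn ℝ 2 w (ball x r)) (hwc : ContinuousOn w (closedBall x r))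
    (hLw : ∀ y ∈ ball x r, 0 ≤ divForm v a w y) (hb : ∀ y ∈ sphere x r, w y ≤ 0) :
    ∀ y ∈ ball x r, w y ≤ 0 := by
  intro y hy
  obtain ⟨y₁, -, hH⟩ :=
    (isCompact_closedBall x r).exists_isMaxOn ⟨y, ball_subset_closedBall hy⟩ hhc
  have hperturbed : ∀ σ > 0, w y ≤ σ * (h y₁ - h y) := by
    intro σ hσ
    have hσw := nonpos_of_divForm_pos v ha ha0
      (w := fun z => σ * h z + 1 * w z + -(σ * h y₁))
      ((contDiffOn_const.mul hh).add (contDiffOn_const.mul hw) |>.add contDiffOn_const)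
      ((continuousOn_const.mul hhc).add (continuousOn_const.mul hwc) |>.add continuousOn_const)
      (fun z hz => by
        have hnhds := isOpen_ball.mem_nhds hz
        rw [divForm_mul_add_mul_add_const v _ _ _ (ha z hz) (hh.contDiffAt hnhds)
          (hw.contDiffAt hnhds)]
        nlinarith [hLh z hz, hLw z hz])
      (fun z hz => by
        have hhz : h z ≤ h y₁ := hH (sphere_subset_closedBall hz)
        nlinarith [hb z hz])
      y hy
    linarith
  refine ge_of_tendsto (x := 𝓝[>] (0 : ℝ)) ?_ (eventually_nhdsWithin_of_forall hperturbed)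
  exact (((continuous_id.mul continuous_const).tendsto' 0 0 (by simp))).mono_left
    nhdsWithin_le_nhds

theorem mul_log_add_mul_add_nonpos (v : ι → E) {a u : E → ℝ} {x : E} {r c s t b : ℝ}
    (ha : ContDiffOn ℝ 2 a (ball x r)) (hac : ContinuousOn a (closedBall x r))
    (ha0 : ∀ y ∈ closedBall x r, 0 < a y) (hΔ : ∀ y ∈ ball x r, 0 < laplacianAlong v a y)
    (hu : ContDiffOn ℝ 2 u (ball x r)) (huc : ContinuousOn u (closedBall x r))
    (hLu : ∀ y ∈ ball x r, divForm v a u y = c) (hu0 : ∀ y ∈ sphere x r, u y = 0)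
    (hL : ∀ y ∈ ball x r, 0 ≤ s * laplacianAlong v a y + t * c)
    (hb : ∀ y ∈ sphere x r, s * Real.log (a y) + b ≤ 0) :
    ∀ y ∈ ball x r, s * Real.log (a y) + t * u y + b ≤ 0 := by
  have ha_at : ∀ y ∈ ball x r, ContDiffAt ℝ 2 a y := fun y hy =>
    ha.contDiffAt (isOpen_ball.mem_nhds hy)
  have ha_diff : ∀ y ∈ ball x r, DifferentiableAt ℝ a y := fun y hy =>
    (ha_at y hy).differentiableAt (by norm_num)
  have hlog : ContDiffOn ℝ 2 (fun z => Real.log (a z)) (ball x r) :=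
    ha.log fun y hy => (ha0 y (ball_subset_closedBall hy)).ne'
  have hlogc : ContinuousOn (fun z => Real.log (a z)) (closedBall x r) :=
    hac.log fun y hy => (ha0 y hy).ne'
  have hLlog : ∀ y ∈ ball x r, divForm v a (fun z => Real.log (a z)) y = laplacianAlong v a y :=
    fun y hy => divForm_log v ((ha_at y hy).eventually (by simp) |>.mono fun z hz =>
      hz.differentiableAt (by norm_num)) (ha0 y (ball_subset_closedBall hy)).ne'
  refine nonpos_of_divForm_nonneg v (h := fun z => Real.log (a z)) ha_diff
    (fun y hy => (ha0 y (ball_subset_closedBall hy)).le) hlog hlogc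
    (fun y hy => (hLlog y hy).symm ▸ hΔ y hy)
    ((contDiffOn_const.mul hlog).add (contDiffOn_const.mul hu) |>.add contDiffOn_const)
    ((continuousOn_const.mul hlogc).add (continuousOn_const.mul huc) |>.add continuousOn_const)
    (fun y hy => ?_) (fun y hy => by simpa [hu0 y hy] using hb y hy)
  have hnhds := isOpen_ball.mem_nhds hy
  rw [divForm_mul_add_mul_add_const v _ _ _ (ha_diff y hy) (hlog.contDiffAt hnhds)
    (hu.contDiffAt hnhds), hLlog y hy, hLu y hy]
  exact hL y hy

theorem log_barrier_bounds (v : ι → E) {a u : E → ℝ} {x : E} {r m M c B : ℝ}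
    (ha : ContDiffOn ℝ 2 a (ball x r)) (hac : ContinuousOn a (closedBall x r))
    (ha0 : ∀ y ∈ closedBall x r, 0 < a y) (hm : 0 < m)
    (hΔ : ∀ y ∈ ball x r, m ≤ laplacianAlong v a y ∧ laplacianAlong v a y ≤ M) (hc : 0 ≤ c)
    (hu : ContDiffOn ℝ 2 u (ball x r)) (huc : ContinuousOn u (closedBall x r))
    (hLu : ∀ y ∈ ball x r, divForm v a u y = c) (hu0 : ∀ y ∈ sphere x r, u y = 0)
    (hB : ∀ y ∈ sphere x r, |Real.log (a y)| ≤ B) :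
    ∀ y ∈ ball x r, c / m * Real.log (a y) - c / m * B ≤ u y ∧
      u y ≤ c / M * Real.log (a y) + c / M * B := by
  have hΔpos : ∀ y ∈ ball x r, 0 < laplacianAlong v a y := fun y hy => hm.trans_le (hΔ y hy).1
  intro y hy
  have hM : 0 < M := (hΔpos y hy).trans_le (hΔ y hy).2
  constructor
  · have hlower := mul_log_add_mul_add_nonpos v ha hac ha0 hΔpos hu huc hLu hu0
      (s := c / m) (t := -1) (b := -(c / m * B))
      (fun z hz => by
        have h := mul_le_mul_of_nonneg_left (hΔ z hz).1 (by positivity : 0 ≤ c / m)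
        rw [div_mul_cancel₀ _ hm.ne'] at h
        linarith)
      (fun z hz => by
        nlinarith [mul_le_mul_of_nonneg_left ((le_abs_self _).trans (hB z hz))
          (by positivity : 0 ≤ c / m)])
      y hy
    linarith
  · have hupper := mul_log_add_mul_add_nonpos v ha hac ha0 hΔpos hu huc hLu hu0
      (s := -(c / M)) (t := 1) (b := -(c / M * B))
      (fun z hz => by
        have h := mul_le_mul_of_nonneg_left (hΔ z hz).2 (by positivity : 0 ≤ c / M)
        rw [div_mul_cancel₀ _ hM.ne'] at h
        linarith)
      (fun z hz => by
        nlinarith [mul_le_mul_of_nonneg_left ((neg_le_abs _).trans (hB z hz))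
          (by positivity : 0 ≤ c / M)])
      y hy
    linarith

end DivergenceForm

theorem Real.abs_log_le_of_mem_Icc {κ ρ x : ℝ} (hκ0 : 0 < κ) (hκ1 : κ ≤ 1) (hρ0 : 0 < ρ)
    (hρ : ρ ≤ 1 / 2) (hx : x ∈ Set.Icc (κ * ρ ^ 2) 1) :
    |Real.log x| ≤ (Real.log κ⁻¹ / Real.log 2 + 2) * |Real.log ρ| := by
  obtain ⟨hx, hx1⟩ := hx
  have hlog2 : 0 < Real.log 2 := Real.log_pos one_lt_two
  have hlogρ : Real.log 2 ≤ |Real.log ρ| := by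
    rw [abs_of_neg (Real.log_neg hρ0 (by linarith)), ← Real.log_inv]
    exact Real.log_le_log (by norm_num) ((le_inv_comm₀ two_pos hρ0).2 (by linarith))
  have hlogκ : 0 ≤ Real.log κ⁻¹ := Real.log_nonneg (one_le_inv₀ hκ0 |>.2 hκ1)
  have hlogx : -Real.log x ≤ Real.log κ⁻¹ + 2 * |Real.log ρ| := by
    have hκρ : Real.log (κ * ρ ^ 2) = -Real.log κ⁻¹ - 2 * |Real.log ρ| := by
      rw [Real.log_mul hκ0.ne' (by positivity), Real.log_pow, Real.log_inv,
        abs_of_neg (Real.log_neg hρ0 (by linarith))]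
      push_cast
      ring
    linarith [Real.log_le_log (by positivity) hx]
  have hκρ : Real.log κ⁻¹ ≤ Real.log κ⁻¹ / Real.log 2 * |Real.log ρ| := by
    rw [div_mul_eq_mul_div, le_div_iff₀ hlog2]
    exact mul_le_mul_of_nonneg_left hlogρ hlogκ
  rw [abs_of_nonpos (Real.log_nonpos ((by positivity : (0 : ℝ) ≤ κ * ρ ^ 2).trans hx) hx1)]
  linarith

theorem dlt_mem_Ioc {d : ℕ} {ε κ ρ : ℝ} {f g : Rsp d → ℝ} {y : Rsp d} (hκ : 0 < κ) (hε : 0 < ε)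
    (hερ : ε ≤ ρ ^ 2) (hρ : (1 + κ⁻¹) * ρ ^ 2 ≤ 1 / 2) (hy : ‖y‖ ≤ ρ)
    (hpinch : κ * ‖y‖ ^ 2 ≤ f y - g y ∧ f y - g y ≤ κ⁻¹ * ‖y‖ ^ 2) :
    dlt ε f g y ∈ Set.Ioc (κ * ‖y‖ ^ 2) 1 := by
  have hyρ : κ⁻¹ * ‖y‖ ^ 2 ≤ κ⁻¹ * ρ ^ 2 := by gcongr
  constructor <;> simp only [dlt] <;> linarith [hpinch.1, hpinch.2]
theorem stmt_17_general (d : ℕ) (κ : ℝ) (hκ : κ ∈ Set.Ioo (0 : ℝ) 1)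
    (M : ℝ) (hM : 1 ≤ M) :
    ∃ C : ℝ, 0 < C ∧
      ∀ ε R ρ : ℝ, ε ∈ Set.Ioo (0 : ℝ) 1 → R ∈ Set.Ioo (0 : ℝ) 1 →
        0 < ρ → ρ ≤ 2 * R → ε ≤ ρ ^ 2 → (1 + κ⁻¹) * ρ ^ 2 ≤ 1 / 2 →
      ∀ f g : Rsp d → ℝ,
        ContDiff ℝ 2 f → ContDiff ℝ 2 g →
        f 0 = 0 → g 0 = 0 → fderiv ℝ f 0 = 0 → fderiv ℝ g 0 = 0 →
        (∀ y' : Rsp d, ‖y'‖ ≤ 2 * R → g y' ≤ f y') →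
        (∀ y' : Rsp d, ‖y'‖ ≤ 2 * R →
          κ * ‖y'‖ ^ 2 ≤ f y' - g y' ∧ f y' - g y' ≤ κ⁻¹ * ‖y'‖ ^ 2) →
        (∀ y' ∈ Metric.ball (0 : Rsp d) ρ,
          1 / M ≤ ∑ i : Fin d,
              dd2v (dlt ε f g) (EuclideanSpace.single i (1 : ℝ)) y' ∧
          (∑ i : Fin d,
              dd2v (dlt ε f g) (EuclideanSpace.single i (1 : ℝ)) y') ≤ M) →
      ∀ c : ℝ, 0 ≤ c →
      ∀ u₂ : Rsp d → ℝ,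
        ContDiffOn ℝ 2 u₂ (Metric.ball (0 : Rsp d) ρ) →
        ContinuousOn u₂ (closure (Metric.ball (0 : Rsp d) ρ)) →
        (∀ y' ∈ Metric.ball (0 : Rsp d) ρ,
          (∑ i : Fin d, fderiv ℝ (fun w => dlt ε f g w *
              fderiv ℝ u₂ w (EuclideanSpace.single i (1 : ℝ))) y'
            (EuclideanSpace.single i (1 : ℝ))) = c) →
        (∀ y' ∈ Metric.sphere (0 : Rsp d) ρ, u₂ y' = 0) →
      ∀ y' ∈ Metric.ball (0 : Rsp d) ρ,
        M * c * Real.log (dlt ε f g y') - C * c * |Real.log ρ| ≤ u₂ y' ∧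
        u₂ y' ≤ (1 / M) * c * Real.log (dlt ε f g y') + C * c * |Real.log ρ| := by
  obtain ⟨hκ0, hκ1⟩ := hκ
  set D := Real.log κ⁻¹ / Real.log 2
  have hD : 0 ≤ D := div_nonneg (Real.log_nonneg (one_le_inv₀ hκ0 |>.2 hκ1.le))
    (Real.log_pos one_lt_two).le
  refine ⟨M * (D + 2), by positivity, ?_⟩
  intro ε R ρ hε _ hρ hρR hερ hρ_small f g hf hg _ _ _ _ _ hpinch hΔ c hc u₂ hu hu_cont hLu hu0
  have hκ_inv : 1 < κ⁻¹ := one_lt_inv₀ hκ0 |>.2 hκ1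
  have hρ_half : ρ ≤ 1 / 2 := by nlinarith
  have hδ : ContDiff ℝ 2 (dlt ε f g) := (contDiff_const.add hf).sub hg
  have hgap : ∀ y ∈ closedBall (0 : Rsp d) ρ, dlt ε f g y ∈ Set.Ioc (κ * ‖y‖ ^ 2) 1 :=
    fun y hy => have hy' := mem_closedBall_zero_iff.1 hy
      dlt_mem_Ioc hκ0 hε.1 hερ hρ_small hy' (hpinch y (hy'.trans hρR))
  have hδ_sphere : ∀ y ∈ sphere (0 : Rsp d) ρ,
      |Real.log (dlt ε f g y)| ≤ (D + 2) * |Real.log ρ| := fun y hy => by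
    have hgy := hgap y (sphere_subset_closedBall hy)
    rw [mem_sphere_zero_iff_norm.1 hy] at hgy
    exact Real.abs_log_le_of_mem_Icc hκ0 hκ1.le hρ hρ_half (Set.Ioc_subset_Icc_self hgy)
  intro y hy
  obtain ⟨hlow, hup⟩ := log_barrier_bounds (fun i => EuclideanSpace.single i (1 : ℝ))
    hδ.contDiffOn hδ.continuous.continuousOn
    (fun y hy => (by positivity : 0 ≤ κ * ‖y‖ ^ 2).trans_lt (hgap y hy).1) (by positivity) hΔ hc
    hu     (closure_ball (0 : Rsp d) hρ.ne' ▸ hu_cont) hLu hu0 hδ_sphere y hy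
  have hcM : c / M ≤ M * c := (div_le_self hc hM).trans (le_mul_of_one_le_left hc hM)
  have hB : 0 ≤ (D + 2) * |Real.log ρ| := by positivity
  rw [show c / (1 / M) = M * c by field_simp] at hlow
  constructor
  · linarith
  · rw [one_div_mul_eq_div]
    linarith [mul_le_mul_of_nonneg_right hcM hB]

/-- The logarithmic barrier bounds (4.31) for the solution u₂ of
Σ_i ∂_i(δ(y')∂_i u₂) = c in B'_ρ with u₂ = 0 on ∂B'_ρ, under 1/M ≤ Δδ ≤ M:
M·c·ln δ(y') − C·c·|ln ρ| ≤ u₂(y') ≤ (1/M)·c·ln δ(y') + C·c·|ln ρ|, where C depends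
only on n = d+1, κ and M. -/
theorem stmt_17 (d : ℕ) (hd : 2 ≤ d) (κ : ℝ) (hκ : κ ∈ Set.Ioo (0 : ℝ) 1)
    (M : ℝ) (hM : 1 ≤ M) :
    ∃ C : ℝ, 0 < C ∧
      ∀ ε R ρ : ℝ, ε ∈ Set.Ioo (0 : ℝ) 1 → R ∈ Set.Ioo (0 : ℝ) 1 →
        0 < ρ → ρ ≤ 2 * R → ε ≤ ρ ^ 2 → (1 + κ⁻¹) * ρ ^ 2 ≤ 1 / 2 →
      ∀ f g : Rsp d → ℝ,
        ContDiff ℝ 2 f → ContDiff ℝ 2 g →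
        f 0 = 0 → g 0 = 0 → fderiv ℝ f 0 = 0 → fderiv ℝ g 0 = 0 →
        (∀ y' : Rsp d, ‖y'‖ ≤ 2 * R → g y' ≤ f y') →
        (∀ y' : Rsp d, ‖y'‖ ≤ 2 * R →
          κ * ‖y'‖ ^ 2 ≤ f y' - g y' ∧ f y' - g y' ≤ κ⁻¹ * ‖y'‖ ^ 2) →
        (∀ y' ∈ Metric.ball (0 : Rsp d) ρ,
          1 / M ≤ ∑ i : Fin d,
              dd2v (dlt ε f g) (EuclideanSpace.single i (1 : ℝ)) y' ∧
          (∑ i : Fin d,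
              dd2v (dlt ε f g) (EuclideanSpace.single i (1 : ℝ)) y') ≤ M) →
      ∀ c : ℝ, 0 ≤ c →
      ∀ u₂ : Rsp d → ℝ,
        ContDiffOn ℝ 2 u₂ (Metric.ball (0 : Rsp d) ρ) →
        ContinuousOn u₂ (closure (Metric.ball (0 : Rsp d) ρ)) →
        (∀ y' ∈ Metric.ball (0 : Rsp d) ρ,
          (∑ i : Fin d, fderiv ℝ (fun w => dlt ε f g w *
              fderiv ℝ u₂ w (EuclideanSpace.single i (1 : ℝ))) y'
            (EuclideanSpace.single i (1 : ℝ))) = c) →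
        (∀ y' ∈ Metric.sphere (0 : Rsp d) ρ, u₂ y' = 0) →
      ∀ y' ∈ Metric.ball (0 : Rsp d) ρ,
        M * c * Real.log (dlt ε f g y') - C * c * |Real.log ρ| ≤ u₂ y' ∧
        u₂ y' ≤ (1 / M) * c * Real.log (dlt ε f g y') + C * c * |Real.log ρ| :=
  stmt_17_general d κ hκ M hM
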